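/- Consider a single group of n ≥ 2 agents with externality factor α = 1/(n-1), one agent at 0 and n-1 agents at 1. Then the maximum cost at y = 1 equals 2, the maximum cost at y* = 1/2 equals 1, and hence the ratio MC(1)/MC(1/2) = 2, showing the single-group 2-approximation bound is tight. -/

import Mathlib

lemma sum_univ_ite_const {n : ℕ} (i0 : Fin n) (a b : ℝ) :
    ∑ k : Fin n, (if k = i0 then a else b) = a + ((n : ℝ) - 1) * b := by
  have : ∀ k : Fin n, (if k = i0 then a else b) = (if k = i0 then a - b else 0) + b := by
    intro k; by_cases h : k = i0 <;> simp [h]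
  rw [Finset.sum_congr rfl (fun k _ => this k), Finset.sum_add_distrib,
    Finset.sum_ite_eq' Finset.univ i0 (fun _ => a - b)]
  simp
  ring

/-- tightness of the single-group 2-approximation: one agent at 0,
`n-1` agents at 1, `α = 1/(n-1)`. -/
theorem single_group_two_approx_tight (n : ℕ) (hn : 2 ≤ n)
    (hne : (Finset.univ : Finset (Fin n)).Nonempty)
    (α : ℝ) (hα : α = 1 / ((n : ℝ) - 1))
    (x : Fin n → ℝ) (hx : ∀ i : Fin n, x i = if i = (⟨0, by omega⟩ : Fin n) then 0 else 1)
    (c : Fin n → ℝ → ℝ)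
    (hc : ∀ i y, c i y = |y - x i| + α * ∑ k ∈ Finset.univ.erase i, (1 - |y - x k|))
    (MC : ℝ → ℝ) (hMC : ∀ y, MC y = Finset.univ.sup' hne (fun i => c i y)) :
    MC 1 = 2 ∧ MC (1/2) = 1 ∧ MC 1 / MC (1/2) = 2 := by
  set i0 : Fin n := ⟨0, by omega⟩ with hi0
  have hn1 : (1 : ℝ) ≤ (n : ℝ) - 1 := by
    have : (2 : ℝ) ≤ (n : ℝ) := by exact_mod_cast hn
    linarith
  have hn0 : (n : ℝ) - 1 ≠ 0 := by linarith
  have hα1 : α * ((n : ℝ) - 1) = 1 := by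
    rw [hα]; field_simp
  have hαpos : 0 < α := by
    rw [hα]; positivity
  -- costs at y = 1
  have hg1 : ∀ k : Fin n, (1 : ℝ) - |(1:ℝ) - x k| = if k = i0 then 0 else 1 := by
    intro k; rw [hx k]; by_cases h : k = i0 <;> simp [h, abs_of_nonneg]
  have hS1 : ∑ k : Fin n, ((1 : ℝ) - |(1:ℝ) - x k|) = (n : ℝ) - 1 := by
    rw [Finset.sum_congr rfl (fun k _ => hg1 k), sum_univ_ite_const i0 0 1]
    ring
  have hcsum : ∀ i : Fin n, ∀ y : ℝ,
      ∑ k ∈ Finset.univ.erase i, ((1:ℝ) - |y - x k|)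
        = (∑ k : Fin n, ((1:ℝ) - |y - x k|)) - (1 - |y - x i|) := by
    intro i y
    exact Finset.sum_erase_eq_sub (Finset.mem_univ i)
  have hc1 : ∀ i : Fin n, c i 1 = if i = i0 then 2 else α * ((n : ℝ) - 2) := by
    intro i
    rw [hc, hcsum, hS1, hx i]
    by_cases h : i = i0
    · simp only [h, if_true]
      rw [sub_zero, abs_of_nonneg (by norm_num : (0:ℝ) ≤ 1)]
      linarith [hα1]
    · simp only [if_neg h]
      rw [sub_self, abs_zero]
      ring
  -- costs at y = 1/2
  have hchalf : ∀ i : Fin n, c i (1/2) = 1 := by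
    intro i
    have hg : ∀ k : Fin n, (1 : ℝ) - |(1:ℝ)/2 - x k| = 1/2 := by
      intro k; rw [hx k]
      have h12 : |(1:ℝ)/2 - 1| = 1/2 := by
        rw [show (1:ℝ)/2 - 1 = -(1/2) by norm_num, abs_neg,
          abs_of_nonneg (by norm_num : (0:ℝ) ≤ 1/2)]
      by_cases h : k = i0
      · simp only [h, if_true]
        rw [sub_zero, abs_of_nonneg (by norm_num : (0:ℝ) ≤ 1/2)]; norm_num
      · simp only [if_neg h]
        rw [h12]; norm_num
    have hS : ∑ k : Fin n, ((1 : ℝ) - |(1:ℝ)/2 - x k|) = (n : ℝ) * (1/2) := by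
      rw [Finset.sum_congr rfl (fun k _ => hg k)]
      simp [mul_comm]
    rw [hc, hcsum]
    have h2 : |(1:ℝ)/2 - x i| = 1/2 := by
      have := hg i; linarith
    rw [hS, h2]
    have : ((n:ℝ) * (1/2) - (1 - 1/2)) = ((n:ℝ) - 1) * (1/2) := by ring
    rw [this]
    rw [show α * (((n:ℝ) - 1) * (1/2)) = (α * ((n:ℝ)-1)) * (1/2) by ring, hα1]
    norm_num
  have hMC1 : MC 1 = 2 := by
    rw [hMC]
    apply le_antisymm
    · apply Finset.sup'_le
      intro i _
      rw [hc1 i]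
      by_cases h : i = i0
      · simp [h]
      · simp [h]
        have hle : (n : ℝ) - 2 ≤ 2 * ((n : ℝ) - 1) := by linarith
        calc α * ((n:ℝ) - 2) ≤ α * (2 * ((n:ℝ) - 1)) :=
              mul_le_mul_of_nonneg_left hle hαpos.le
          _ = 2 * (α * ((n:ℝ)-1)) := by ring
          _ = 2 := by rw [hα1]; norm_num
    · have := Finset.le_sup' (fun i => c i 1) (Finset.mem_univ i0)
      rw [hc1 i0] at this
      rw [if_pos rfl] at this; exact this
  have hMChalf : MC (1/2) = 1 := by
    rw [hMC]
    apply le_antisymm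
    · apply Finset.sup'_le
      intro i _
      rw [hchalf i]
    · have := Finset.le_sup' (fun i => c i (1/2)) (Finset.mem_univ i0)
      rw [hchalf i0] at this
      exact this
  exact ⟨hMC1, hMChalf, by rw [hMC1, hMChalf]; norm_num⟩
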